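/- arXiv:2002.12593 — 5 statements merged into one kernel-verified Lean document; each statement's English description precedes it below -/
import Mathlib

section
/- Let u be a recurrent aperiodic infinite word, n ∈ ℕ, and m = nrC_u(n). Then there exists h ∈ ℕ ∖ {0} such that: the n-length factors at positions h, h+1, …, h+m−1 are pairwise distinct; the factor f_n(h−1) is right special and equals f_n(h+j) for some 0 ≤ j ≤ m−1; and the factor f_n(h+m) is left special and equals f_n(h+j′) for some 0 ≤ j′ ≤ m−1. -/
/-- The factor of length `n` occurring at position `i` in the infinite word `u`. -/
def window {A : Type*} (u : ℕ → A) (n i : ℕ) : List A :=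
  List.ofFn (fun j : Fin n => u (i + j))

/-- `w` is a factor of the infinite word `u`. -/
def IsFactor {A : Type*} (u : ℕ → A) (w : List A) : Prop :=
  ∃ i, window u w.length i = w

/-- `w` is right special: it extends to the right by two distinct letters. -/
def RightSpecial {A : Type*} (u : ℕ → A) (w : List A) : Prop :=
  ∃ a b : A, a ≠ b ∧ IsFactor u (w ++ [a]) ∧ IsFactor u (w ++ [b])

/-- `w` is left special: it extends to the left by two distinct letters. -/
def LeftSpecial {A : Type*} (u : ℕ → A) (w : List A) : Prop :=
  ∃ a b : A, a ≠ b ∧ IsFactor u (a :: w) ∧ IsFactor u (b :: w)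

/-- `u` is recurrent: every factor occurs at least twice (hence infinitely often). -/
def Recurrent {A : Type*} (u : ℕ → A) : Prop :=
  ∀ n i, ∃ j, i < j ∧ window u n j = window u n i

/-- `u` is eventually periodic. -/
def EventuallyPeriodic {A : Type*} (u : ℕ → A) : Prop :=
  ∃ p N, 0 < p ∧ ∀ i, N ≤ i → u (i + p) = u i

/-- The set of `m` such that some window of `m` consecutive factors of length `n`
are pairwise distinct. -/
def nrSet {A : Type*} (u : ℕ → A) (n : ℕ) : Set ℕ :=
  {m | ∃ k, ∀ i j, i < j → j < m → window u n (k + i) ≠ window u n (k + j)}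

/-- The non-repetitive complexity. -/
noncomputable def nrC {A : Type*} (u : ℕ → A) (n : ℕ) : ℕ := sSup (nrSet u n)


section Aux
variable {A : Type*}

lemma window_length (u : ℕ → A) (n i : ℕ) : (window u n i).length = n := by
  simp [window]

lemma window_eq_iff (u : ℕ → A) (n i j : ℕ) :
    window u n i = window u n j ↔ ∀ t, t < n → u (i + t) = u (j + t) := by
  unfold window
  rw [List.ofFn_inj]
  constructor
  · intro h t ht
    exact congrFun h ⟨t, ht⟩
  · intro h
    funext t
    exact h t t.2

lemma window_append (u : ℕ → A) (n i : ℕ) :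
    window u (n + 1) i = window u n i ++ [u (i + n)] := by
  unfold window
  rw [List.ofFn_succ']
  simp

lemma window_cons (u : ℕ → A) (n i : ℕ) :
    window u (n + 1) i = u i :: window u n (i + 1) := by
  unfold window
  rw [List.ofFn_succ]
  congr 1
  rw [List.ofFn_inj]
  funext j
  show u (i + (↑j + 1)) = u (i + 1 + ↑j)
  congr 1
  omega

lemma right_ext (u : ℕ → A) (n i : ℕ) : IsFactor u (window u n i ++ [u (i + n)]) := by
  have h : (window u n i ++ [u (i + n)]).length = n + 1 := by simp [window_length]
  exact ⟨i, by rw [h, window_append]⟩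

lemma left_ext (u : ℕ → A) (n i : ℕ) : IsFactor u (u i :: window u n (i + 1)) := by
  have h : (u i :: window u n (i + 1)).length = n + 1 := by simp [window_length]
  exact ⟨i, by rw [h, window_cons]⟩

lemma letter_of_not_rs (u : ℕ → A) (n i j : ℕ)
    (hw : window u n i = window u n j)
    (hrs : ¬ RightSpecial u (window u n i)) : u (i + n) = u (j + n) := by
  have h1 := right_ext u n i
  have h2 := right_ext u n j
  rw [← hw] at h2
  by_contra hne
  exact hrs ⟨_, _, hne, h1, h2⟩

lemma shift_of_not_rs (u : ℕ → A) (n i j : ℕ)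
    (hw : window u n i = window u n j)
    (hrs : ¬ RightSpecial u (window u n i)) :
    window u n (i + 1) = window u n (j + 1) := by
  have hab := letter_of_not_rs u n i j hw hrs
  rw [window_eq_iff] at hw ⊢
  intro t ht
  have e1 : i + 1 + t = i + (t + 1) := by omega
  have e2 : j + 1 + t = j + (t + 1) := by omega
  rw [e1, e2]
  rcases Nat.lt_or_ge (t + 1) n with h | h
  · exact hw (t + 1) h
  · have hn : t + 1 = n := by omega
    rw [hn]; exact hab

lemma letter_of_not_ls (u : ℕ → A) (n i j : ℕ)
    (hw : window u n (i + 1) = window u n (j + 1))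
    (hls : ¬ LeftSpecial u (window u n (i + 1))) : u i = u j := by
  have h1 := left_ext u n i
  have h2 := left_ext u n j
  rw [← hw] at h2
  by_contra hne
  exact hls ⟨_, _, hne, h1, h2⟩

lemma shift_of_not_ls (u : ℕ → A) (n i j : ℕ)
    (hw : window u n (i + 1) = window u n (j + 1))
    (hls : ¬ LeftSpecial u (window u n (i + 1))) :
    window u n i = window u n j := by
  have hab := letter_of_not_ls u n i j hw hls
  rw [window_eq_iff] at hw ⊢
  intro t ht
  rcases Nat.eq_zero_or_pos t with rfl | htpos
  · simpa using hab
  · obtain ⟨s, rfl⟩ : ∃ s, t = s + 1 := ⟨t - 1, by omega⟩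
    have e1 : i + (s + 1) = i + 1 + s := by omega
    have e2 : j + (s + 1) = j + 1 + s := by omega
    rw [e1, e2]
    exact hw s (by omega)

end Aux

theorem stmt3 {A : Type*} [Fintype A] (u : ℕ → A) (hrec : Recurrent u)
    (hap : ¬ EventuallyPeriodic u) (n m : ℕ) (hm : m = nrC u n) :
    ∃ h : ℕ, 1 ≤ h ∧
      (∀ i j, i < j → j < m → window u n (h + i) ≠ window u n (h + j)) ∧
      RightSpecial u (window u n (h - 1)) ∧
      (∃ j, j < m ∧ window u n (h - 1) = window u n (h + j)) ∧
      LeftSpecial u (window u n (h + m)) ∧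
      (∃ j, j < m ∧ window u n (h + m) = window u n (h + j)) := by
  classical
  have hnrc : nrC u n = sSup (nrSet u n) := rfl
  rw [hnrc] at hm
  -- 1 ∈ nrSet
  have hone : (1 : ℕ) ∈ nrSet u n := ⟨0, fun i j hij hj => absurd hj (by omega)⟩
  -- nrSet is bounded above
  have hbdd : ∀ m' ∈ nrSet u n, m' ≤ Fintype.card (Fin n → A) := by
    rintro m' ⟨k, hk⟩
    have hinj : Function.Injective (fun i : Fin m' => (fun t : Fin n => u (k + i + t))) := by
      intro i j hij
      by_contra hne
      have key : ∀ i j : Fin m', (i : ℕ) < (j : ℕ) →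
          (fun t : Fin n => u (k + i + t)) = (fun t : Fin n => u (k + j + t)) → False := by
        intro i j hlt heq
        apply hk i j hlt j.isLt
        rw [window_eq_iff]
        intro t ht
        exact congrFun heq ⟨t, ht⟩
      rcases lt_trichotomy (i : ℕ) (j : ℕ) with h | h | h
      · exact key i j h hij
      · exact hne (Fin.ext h)
      · exact key j i h hij.symm
    calc m' = Fintype.card (Fin m') := (Fintype.card_fin m').symm
      _ ≤ _ := Fintype.card_le_of_injective _ hinj
  have hBdd : BddAbove (nrSet u n) := ⟨_, fun x hx => hbdd x hx⟩
  have hmem : m ∈ nrSet u n := by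
    rw [hm]; exact Nat.sSup_mem ⟨1, hone⟩ hBdd
  have hm1 : 1 ≤ m := by rw [hm]; exact le_csSup hBdd hone
  have hnot : (m + 1) ∉ nrSet u n := by
    intro hmem1
    have := le_csSup hBdd hmem1
    omega
  -- the pairwise-distinct predicate
  set S : ℕ → Prop := fun k => ∀ i j, i < j → j < m →
    window u n (k + i) ≠ window u n (k + j) with hSdef
  -- the left repeat
  have repeatL : ∀ k, 1 ≤ k → S k → ∃ j, j < m ∧ window u n (k - 1) = window u n (k + j) := by
    intro k hk hS
    by_contra hcon
    push_neg at hcon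
    apply hnot
    refine ⟨k - 1, fun i j hij hj heq => ?_⟩
    rcases Nat.eq_zero_or_pos i with rfl | hi
    · have e0 : k - 1 + 0 = k - 1 := by omega
      have e : k - 1 + j = k + (j - 1) := by omega
      rw [e0, e] at heq
      exact hcon (j - 1) (by omega) heq
    · have e1 : k - 1 + i = k + (i - 1) := by omega
      have e2 : k - 1 + j = k + (j - 1) := by omega
      rw [e1, e2] at heq
      exact hS (i - 1) (j - 1) (by omega) (by omega) heq
  -- the right repeat
  have repeatR : ∀ k, S k → ∃ j, j < m ∧ window u n (k + m) = window u n (k + j) := by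
    intro k hS
    by_contra hcon
    push_neg at hcon
    apply hnot
    refine ⟨k, fun i j hij hj heq => ?_⟩
    rcases Nat.lt_or_ge j m with hjm | hjm
    · exact hS i j hij hjm heq
    · have e : j = m := by omega
      subst e
      exact hcon i (by omega) heq.symm
  -- key: if the boundary special conditions fail, we get a period step
  have key : ∀ k, 1 ≤ k → S k →
      (¬ RightSpecial u (window u n (k - 1)) ∨ ¬ LeftSpecial u (window u n (k + m))) →
      window u n k = window u n (k + m) ∧ u (k - 1) = u (k + m - 1) := by
    intro k hk hS hfail
    rcases hfail with hrs | hls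
    · obtain ⟨j, hj, hw⟩ := repeatL k hk hS
      have hsh := shift_of_not_rs u n (k - 1) (k + j) hw hrs
      have e : k - 1 + 1 = k := by omega
      rw [e] at hsh
      have hjm : j + 1 = m := by
        by_contra hne
        have hj1 : j + 1 < m := by omega
        apply hS 0 (j + 1) (by omega) hj1
        rw [Nat.add_zero]
        rw [show k + j + 1 = k + (j + 1) from by omega] at hsh
        exact hsh
      constructor
      · rw [show k + m = k + j + 1 from by omega]
        exact hsh
      · -- u (k-1) = u (k+m-1)
        rcases Nat.eq_zero_or_pos n with rfl | hn
        · have hab := letter_of_not_rs u 0 (k - 1) (k + j) hw hrs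
          simpa [show k + j + 0 = k + m - 1 from by omega] using hab
        · have := (window_eq_iff u n (k - 1) (k + j)).1 hw 0 hn
          simpa [show k + j + 0 = k + m - 1 from by omega] using this
    · obtain ⟨j, hj, hw⟩ := repeatR k hS
      have hj0 : j = 0 := by
        by_contra hjne
        have hj1 : 1 ≤ j := by omega
        have hw' : window u n (k + m - 1 + 1) = window u n (k + j - 1 + 1) := by
          rw [show k + m - 1 + 1 = k + m from by omega,
              show k + j - 1 + 1 = k + j from by omega]
          exact hw
        have hls' : ¬ LeftSpecial u (window u n (k + m - 1 + 1)) := by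
          rw [show k + m - 1 + 1 = k + m from by omega]
          exact hls
        have hsh := shift_of_not_ls u n (k + m - 1) (k + j - 1) hw' hls'
        apply hS (j - 1) (m - 1) (by omega) (by omega)
        rw [show k + (j - 1) = k + j - 1 from by omega,
            show k + (m - 1) = k + m - 1 from by omega]
        exact hsh.symm
      subst hj0
      rw [Nat.add_zero] at hw
      have hw' : window u n (k + m - 1 + 1) = window u n (k - 1 + 1) := by
        rw [show k + m - 1 + 1 = k + m from by omega, show k - 1 + 1 = k from by omega]
        exact hw
      have hls' : ¬ LeftSpecial u (window u n (k + m - 1 + 1)) := by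
        rw [show k + m - 1 + 1 = k + m from by omega]
        exact hls
      have hab := letter_of_not_ls u n (k + m - 1) (k - 1) hw' hls'
      exact ⟨hw.symm, hab.symm⟩
  -- the step: S k survives
  have step : ∀ k, S k → window u n k = window u n (k + m) → S (k + 1) := by
    intro k hS ha i j hij hj heq
    rcases Nat.lt_or_ge (j + 1) m with hjm | hjm
    · apply hS (i + 1) (j + 1) (by omega) hjm
      rw [show k + (i + 1) = k + 1 + i from by omega,
          show k + (j + 1) = k + 1 + j from by omega]
      exact heq
    · have hje : j = m - 1 := by omega
      apply hS 0 (i + 1) (by omega) (by omega)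
      rw [Nat.add_zero, show k + (i + 1) = k + 1 + i from by omega]
      rw [heq, show k + 1 + j = k + m from by omega]
      exact ha
  -- get a starting point h0 ≥ 1 with S h0
  obtain ⟨k0, hk0⟩ := hmem
  obtain ⟨h0, hh0gt, hh0w⟩ := hrec (n + m) k0
  have hh0 : 1 ≤ h0 := by omega
  have hSh0 : S h0 := by
    have hpt := (window_eq_iff u (n + m) h0 k0).1 hh0w
    have hcopy : ∀ i, i < m → window u n (h0 + i) = window u n (k0 + i) := by
      intro i hi
      rw [window_eq_iff]
      intro t ht
      have := hpt (i + t) (by omega)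
      rw [show h0 + i + t = h0 + (i + t) from by omega,
          show k0 + i + t = k0 + (i + t) from by omega]
      exact this
    intro i j hij hj heq
    apply hk0 i j hij hj
    rw [← hcopy i (by omega), ← hcopy j hj]
    exact heq
  -- main claim
  have main : ∃ h, 1 ≤ h ∧ S h ∧ RightSpecial u (window u n (h - 1)) ∧
      LeftSpecial u (window u n (h + m)) := by
    by_contra hcon
    push_neg at hcon
    have fail : ∀ k, 1 ≤ k → S k →
        (¬ RightSpecial u (window u n (k - 1)) ∨ ¬ LeftSpecial u (window u n (k + m))) := by
      intro k hk hS
      rcases Classical.em (RightSpecial u (window u n (k - 1))) with hrs | hrs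
      · exact Or.inr (hcon k hk hS hrs)
      · exact Or.inl hrs
    have hall : ∀ t, S (h0 + t) := by
      intro t
      induction t with
      | zero => simpa using hSh0
      | succ t ih =>
        have h1 : 1 ≤ h0 + t := by omega
        obtain ⟨ha, _⟩ := key (h0 + t) h1 ih (fail (h0 + t) h1 ih)
        have := step (h0 + t) ih ha
        rw [show h0 + (t + 1) = h0 + t + 1 from by omega]
        exact this
    apply hap
    refine ⟨m, h0 - 1, by omega, ?_⟩
    intro i hi
    have hS' : S (i + 1) := by
      have := hall (i + 1 - h0)
      rw [show h0 + (i + 1 - h0) = i + 1 from by omega] at this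
      exact this
    obtain ⟨_, hb⟩ := key (i + 1) (by omega) hS' (fail (i + 1) (by omega) hS')
    rw [show i + 1 - 1 = i from by omega, show i + 1 + m - 1 = i + m from by omega] at hb
    exact hb.symm
  obtain ⟨h, h1, hS, hRS, hLS⟩ := main
  exact ⟨h, h1, hS, hRS, repeatL h h1 hS, hLS, repeatR h hS⟩
end

section
/- For every Sturmian word u and every n ∈ ℕ, the non-repetitive complexity satisfies nrC_u(n) = n + 1. -/
namespace NRCproof

lemma fin_cover (a b c : Fin 2) (h : b ≠ c) : a = b ∨ a = c := by revert h; revert a b c; decide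

lemma fin01 (c : Fin 2) : c = 0 ∨ c = 1 := by revert c; decide

def ot (c : Fin 2) : Fin 2 := if c = 0 then 1 else 0

lemma ot_ne (c : Fin 2) : ot c ≠ c := by revert c; decide

variable (u : ℕ → Fin 2)

def Fset (n : ℕ) : Set (List (Fin 2)) := {w | ∃ i, window u n i = w}

lemma window_mem (n i : ℕ) : window u n i ∈ Fset u n := ⟨i, rfl⟩

lemma Fset_finite (n : ℕ) : (Fset u n).Finite := by
  apply (Set.finite_range (fun v : Fin n → Fin 2 => List.ofFn v)).subset
  rintro w ⟨i, rfl⟩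
  exact ⟨fun j => u (i + j), rfl⟩

lemma window_eq_iff {n a b : ℕ} :
    window u n a = window u n b ↔ ∀ j, j < n → u (a + j) = u (b + j) := by
  unfold window
  rw [List.ofFn_inj]
  constructor
  · intro h j hj; exact congrFun h ⟨j, hj⟩
  · intro h; funext j; exact h j j.2

lemma window_concat (n z : ℕ) :
    window u (n+1) z = window u n z ++ [u (z + n)] := by
  unfold window
  rw [List.ofFn_succ']
  simp [List.concat_eq_append]

lemma dropLast_snoc (l : List (Fin 2)) (c : Fin 2) : (l ++ [c]).dropLast = l := by simp

lemma window_dropLast (n z : ℕ) : (window u (n+1) z).dropLast = window u n z := by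
  rw [window_concat, dropLast_snoc]

lemma window_step {n a b : ℕ} (h : window u n a = window u n b)
    (hl : u (a + n) = u (b + n)) : window u n (a+1) = window u n (b+1) := by
  rw [window_eq_iff] at h ⊢
  intro j hj
  rcases Nat.lt_or_ge (j+1) n with h' | h'
  · have hq := h (j+1) h'
    have e1 : a + 1 + j = a + (j+1) := by omega
    have e2 : b + 1 + j = b + (j+1) := by omega
    rw [e1, e2]; exact hq
  · have e1 : a + 1 + j = a + n := by omega
    have e2 : b + 1 + j = b + n := by omega
    rw [e1, e2]; exact hl


def InfOcc (m : ℕ) (w : List (Fin 2)) : Prop := ∀ N, ∃ z, N ≤ z ∧ window u m z = w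

lemma infOcc_mem {m : ℕ} {w} (h : InfOcc u m w) : w ∈ Fset u m := by
  obtain ⟨z, _, hz⟩ := h 0; exact ⟨z, hz⟩

def Tset (m : ℕ) : Set (List (Fin 2)) := {w | InfOcc u m w}

lemma Tset_subset (m : ℕ) : Tset u m ⊆ Fset u m := fun _ h => infOcc_mem u h

lemma Tset_finite (m : ℕ) : (Tset u m).Finite := (Fset_finite u m).subset (Tset_subset u m)

lemma not_infOcc {m : ℕ} {w} (h : ¬ InfOcc u m w) :
    ∃ N, ∀ z, N ≤ z → window u m z ≠ w := by
  unfold InfOcc at h; push_neg at h; exact h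

lemma tail_infOcc (m : ℕ) : ∃ N, ∀ z, N ≤ z → InfOcc u m (window u m z) := by
  classical
  have hchoice : ∀ w : List (Fin 2), ∃ N, ¬ InfOcc u m w → ∀ z, N ≤ z → window u m z ≠ w := by
    intro w
    by_cases h : InfOcc u m w
    · exact ⟨0, fun h' => absurd h h'⟩
    · obtain ⟨N, hN⟩ := not_infOcc u h
      exact ⟨N, fun _ => hN⟩
  choose f hf using hchoice
  have hBfin : {w ∈ Fset u m | ¬ InfOcc u m w}.Finite :=
    (Fset_finite u m).subset (fun w hw => hw.1)
  refine ⟨hBfin.toFinset.sup f, fun z hz => ?_⟩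
  by_contra hcon
  have hmem : window u m z ∈ {w ∈ Fset u m | ¬ InfOcc u m w} := ⟨window_mem u m z, hcon⟩
  have hle : f (window u m z) ≤ hBfin.toFinset.sup f :=
    Finset.le_sup (hBfin.mem_toFinset.mpr hmem)
  exact hf _ hcon z (le_trans hle hz) rfl

variable (hS : ∀ n, (Fset u n).ncard = n + 1)
include hS

lemma no_per {p N : ℕ} (hp : 0 < p) (hper : ∀ z, N ≤ z → u (z + p) = u z) : False := by
  set L := N + p with hL
  have key : ∀ z, ∃ z', z' < L ∧ window u L z' = window u L z := by
    intro z
    induction z using Nat.strong_induction_on with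
    | _ z ih =>
      rcases Nat.lt_or_ge z L with h | h
      · exact ⟨z, h, rfl⟩
      · have hz : window u L (z - p) = window u L z := by
          rw [window_eq_iff]
          intro j hj
          have h2 : z - p + j + p = z + j := by omega
          have h3 := hper (z - p + j) (by omega)
          rw [h2] at h3
          exact h3.symm
        obtain ⟨z', h1, h2⟩ := ih (z - p) (by omega)
        exact ⟨z', h1, h2.trans hz⟩
  have hsub : Fset u L ⊆ (fun z => window u L z) '' Set.Iio L := by
    rintro w ⟨i, rfl⟩
    obtain ⟨z', h1, h2⟩ := key i
    exact ⟨z', h1, h2⟩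
  have h1 : (Fset u L).ncard ≤ (Set.Iio L).ncard :=
    le_trans (Set.ncard_le_ncard hsub ((Set.finite_Iio L).image _))
      (Set.ncard_image_le (Set.finite_Iio L))
  rw [hS L] at h1
  have h2 : (Set.Iio L).ncard = L := by
    rw [← Finset.coe_Iio, Set.ncard_coe_finset, Nat.card_Iio]
  omega

lemma exists_double (m : ℕ) :
    ∃ w, InfOcc u m w ∧ InfOcc u (m+1) (w ++ [0]) ∧ InfOcc u (m+1) (w ++ [1]) := by
  classical
  by_contra hcon
  push_neg at hcon
  obtain ⟨N₁, hN₁⟩ := tail_infOcc u m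
  obtain ⟨N₂, hN₂⟩ := tail_infOcc u (m+1)
  set N := max N₁ N₂ with hN
  have hlet : ∀ z z', N ≤ z → N ≤ z' → window u m z = window u m z' →
      u (z + m) = u (z' + m) := by
    intro z z' hz hz' heq
    by_contra hne
    have hiw : InfOcc u m (window u m z) := hN₁ z (le_trans (le_max_left _ _) hz)
    have hz1 : InfOcc u (m+1) (window u m z ++ [u (z+m)]) := by
      have h := hN₂ z (le_trans (le_max_right _ _) hz)
      rwa [window_concat] at h
    have hz2 : InfOcc u (m+1) (window u m z ++ [u (z'+m)]) := by
      have h := hN₂ z' (le_trans (le_max_right _ _) hz')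
      rwa [window_concat, ← heq] at h
    have h0 : InfOcc u (m+1) (window u m z ++ [(0 : Fin 2)]) := by
      rcases fin_cover 0 _ _ hne with h | h
      · rw [h]; exact hz1
      · rw [h]; exact hz2
    have h1 : InfOcc u (m+1) (window u m z ++ [(1 : Fin 2)]) := by
      rcases fin_cover 1 _ _ hne with h | h
      · rw [h]; exact hz1
      · rw [h]; exact hz2
    exact hcon (window u m z) hiw h0 h1
  have hmain : ∀ (a b : ℕ), a ∈ Set.Icc N (N+m+1) → window u m a = window u m b →
      a < b → False := by
    intro a b ha heq hab
    have ha1 : N ≤ a := ha.1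
    set p := b - a with hp
    have hp0 : 0 < p := by omega
    have key : ∀ d, window u m (a + d) = window u m (a + d + p) := by
      intro d
      induction d with
      | zero =>
        have e : a + 0 + p = b := by omega
        rw [e, Nat.add_zero]; exact heq
      | succ d ih =>
        have hl := hlet (a+d) (a+d+p) (by omega) (by omega) ih
        have hstep := window_step u ih hl
        have e : a + (d+1) + p = a + d + p + 1 := by omega
        have e2 : a + (d+1) = a + d + 1 := by omega
        rw [e, e2]; exact hstep
    apply no_per u hS hp0 (N := a + m)
    intro z hz
    have hd := key (z - a - m)
    have hl := hlet (a + (z-a-m)) (a + (z-a-m) + p) (by omega) (by omega) hd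
    have e1 : a + (z - a - m) + m = z := by omega
    have e2 : a + (z-a-m) + p + m = z + p := by omega
    rw [e1, e2] at hl
    exact hl.symm
  have hni : ¬ Set.InjOn (window u m) (Set.Icc N (N + m + 1)) := by
    intro hinj
    have h1 : (Set.Icc N (N+m+1)).ncard = m + 2 := by
      rw [← Finset.coe_Icc, Set.ncard_coe_finset, Nat.card_Icc]; omega
    have h2 : (window u m '' Set.Icc N (N+m+1)).ncard = m + 2 := by
      rw [Set.ncard_image_of_injOn hinj, h1]
    have h3 : window u m '' Set.Icc N (N+m+1) ⊆ Fset u m := by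
      rintro w ⟨i, _, rfl⟩; exact window_mem u m i
    have h4 := Set.ncard_le_ncard h3 (Fset_finite u m)
    rw [h2, hS m] at h4; omega
  rw [Set.InjOn] at hni; push_neg at hni
  obtain ⟨a, ha, b, hb, heq, hne⟩ := hni
  rcases Nat.lt_or_ge a b with h | h
  · exact hmain a b ha heq h
  · exact hmain b a hb heq.symm (by omega)

lemma Tcard (m : ℕ) : m + 1 ≤ (Tset u m).ncard := by
  classical
  induction m with
  | zero =>
    have hmem : ([] : List (Fin 2)) ∈ Tset u 0 := by
      intro N; exact ⟨N, le_refl N, by simp [window]⟩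
    have := (Set.ncard_pos (Tset_finite u 0)).mpr ⟨[], hmem⟩
    omega
  | succ m ih =>
    obtain ⟨w', _, h0, h1⟩ := exists_double u hS m
    have hext : ∀ w, InfOcc u m w → ∃ c : Fin 2, InfOcc u (m+1) (w ++ [c]) := by
      intro w hw
      by_contra hc
      push_neg at hc
      obtain ⟨N₀, hN₀⟩ := not_infOcc u (hc 0)
      obtain ⟨N₁, hN₁⟩ := not_infOcc u (hc 1)
      obtain ⟨z, hz, hzw⟩ := hw (max N₀ N₁)
      have hcon : window u (m+1) z = w ++ [u (z+m)] := by rw [window_concat, hzw]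
      rcases fin01 (u (z+m)) with h | h
      · exact hN₀ z (le_trans (le_max_left _ _) hz) (by rw [hcon, h])
      · exact hN₁ z (le_trans (le_max_right _ _) hz) (by rw [hcon, h])
    let σ : List (Fin 2) → Fin 2 := fun w => if h : InfOcc u m w then (hext w h).choose else 0
    have hσspec : ∀ w, InfOcc u m w → InfOcc u (m+1) (w ++ [σ w]) := by
      intro w h; simp only [σ, dif_pos h]; exact (hext w h).choose_spec
    set e : List (Fin 2) → List (Fin 2) := fun w => w ++ [σ w] with he
    have himg : ∀ w ∈ Tset u m, e w ∈ Tset u (m+1) := fun w h => hσspec w h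
    have hinj : Set.InjOn e (Tset u m) := by
      intro w1 _ w2 _ heq
      exact (List.append_inj' heq rfl).1
    set x := w' ++ [ot (σ w')] with hx
    have hxmem : x ∈ Tset u (m+1) := by
      rcases fin01 (ot (σ w')) with h | h
      · rw [hx, h]; exact h0
      · rw [hx, h]; exact h1
    have hxnot : x ∉ e '' Tset u m := by
      rintro ⟨w, hw, hew⟩
      obtain ⟨h1', h2'⟩ := List.append_inj' hew rfl
      have h3 : σ w = ot (σ w') := by injection h2'
      rw [h1'] at h3
      exact ot_ne (σ w') h3.symm
    have hsub : insert x (e '' Tset u m) ⊆ Tset u (m+1) := by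
      intro y hy
      rcases hy with rfl | ⟨w, hw, rfl⟩
      · exact hxmem
      · exact himg w hw
    have hfin : (e '' Tset u m).Finite := (Tset_finite u m).image e
    have hcard1 : (insert x (e '' Tset u m)).ncard = (e '' Tset u m).ncard + 1 :=
      Set.ncard_insert_of_notMem hxnot hfin
    have hcard2 : (e '' Tset u m).ncard = (Tset u m).ncard := Set.ncard_image_of_injOn hinj
    have hle := Set.ncard_le_ncard hsub (Tset_finite u (m+1))
    omega

lemma Tset_eq (m : ℕ) : Tset u m = Fset u m := by
  apply Set.eq_of_subset_of_ncard_le (Tset_subset u m) _ (Fset_finite u m)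
  rw [hS m]; exact Tcard u hS m

lemma recur (m : ℕ) {w} (hw : w ∈ Fset u m) : InfOcc u m w := by
  rw [← Tset_eq u hS m] at hw; exact hw


lemma exists_rsp (n : ℕ) :
    ∃ r, r ∈ Fset u n ∧ (r ++ [(0:Fin 2)] ∈ Fset u (n+1)) ∧ (r ++ [(1:Fin 2)] ∈ Fset u (n+1)) := by
  classical
  have hni : ¬ Set.InjOn (fun w : List (Fin 2) => w.dropLast) (Fset u (n+1)) := by
    intro hinj
    have hsub : (fun w : List (Fin 2) => w.dropLast) '' Fset u (n+1) ⊆ Fset u n := by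
      rintro w ⟨w', ⟨z, rfl⟩, rfl⟩
      show (window u (n+1) z).dropLast ∈ Fset u n
      rw [window_dropLast]
      exact window_mem u n z
    have h1 := Set.ncard_le_ncard hsub (Fset_finite u n)
    rw [Set.ncard_image_of_injOn hinj, hS, hS] at h1
    omega
  rw [Set.InjOn] at hni; push_neg at hni
  obtain ⟨w1, hw1, w2, hw2, hdl, hne⟩ := hni
  obtain ⟨z1, hz1⟩ := hw1
  obtain ⟨z2, hz2⟩ := hw2
  rw [← hz1, ← hz2, window_dropLast, window_dropLast] at hdl
  have e1 : window u n z1 ++ [u (z1 + n)] ∈ Fset u (n+1) := by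
    rw [← window_concat]; exact window_mem u (n+1) z1
  have e2 : window u n z1 ++ [u (z2 + n)] ∈ Fset u (n+1) := by
    rw [hdl, ← window_concat]; exact window_mem u (n+1) z2
  have hlet : u (z1+n) ≠ u (z2+n) := by
    intro h
    apply hne
    rw [← hz1, ← hz2, window_concat, window_concat, ← hdl, h]
  refine ⟨window u n z1, window_mem u n z1, ?_, ?_⟩
  · rcases fin_cover 0 _ _ hlet with h | h
    · rw [h]; exact e1
    · rw [h]; exact e2
  · rcases fin_cover 1 _ _ hlet with h | h
    · rw [h]; exact e1
    · rw [h]; exact e2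

lemma rsp_det (n : ℕ) {r : List (Fin 2)}
    (hr0 : r ++ [(0:Fin 2)] ∈ Fset u (n+1)) (hr1 : r ++ [(1:Fin 2)] ∈ Fset u (n+1)) :
    ∀ z z', window u n z = window u n z' → window u n z ≠ r →
      u (z + n) = u (z' + n) := by
  classical
  intro z z' heq hner
  by_contra hne
  set w := window u n z with hw
  have hw0 : w ++ [(0:Fin 2)] ∈ Fset u (n+1) ∧ w ++ [(1:Fin 2)] ∈ Fset u (n+1) := by
    have e1 : w ++ [u (z + n)] ∈ Fset u (n+1) := by
      rw [hw, ← window_concat]; exact window_mem u (n+1) z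
    have e2 : w ++ [u (z' + n)] ∈ Fset u (n+1) := by
      rw [heq, ← window_concat]; exact window_mem u (n+1) z'
    constructor
    · rcases fin_cover 0 _ _ hne with h | h
      · rw [h]; exact e1
      · rw [h]; exact e2
    · rcases fin_cover 1 _ _ hne with h | h
      · rw [h]; exact e1
      · rw [h]; exact e2
  obtain ⟨hw0, hw1⟩ := hw0
  have hext : ∀ v, v ∈ Fset u n → ∃ c : Fin 2, v ++ [c] ∈ Fset u (n+1) := by
    rintro v ⟨i, rfl⟩
    exact ⟨u (i+n), ⟨i, window_concat u n i⟩⟩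
  let σ : List (Fin 2) → Fin 2 := fun v => if h : v ∈ Fset u n then (hext v h).choose else 0
  have hσ : ∀ v, v ∈ Fset u n → v ++ [σ v] ∈ Fset u (n+1) := by
    intro v h; simp only [σ, dif_pos h]; exact (hext v h).choose_spec
  set e : List (Fin 2) → List (Fin 2) := fun v => v ++ [σ v] with he
  have hinj : Set.InjOn e (Fset u n) := fun a _ b _ h => (List.append_inj' h rfl).1
  have hrF : r ∈ Fset u n := by
    obtain ⟨z0, hz0⟩ := hr0
    refine ⟨z0, ?_⟩
    have h := window_dropLast u n z0
    rw [hz0, dropLast_snoc] at h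
    exact h.symm
  have hwF : w ∈ Fset u n := by rw [hw]; exact window_mem u n z
  set xr := r ++ [ot (σ r)] with hxr
  set xw := w ++ [ot (σ w)] with hxw
  have hxrF : xr ∈ Fset u (n+1) := by
    rcases fin01 (ot (σ r)) with h | h
    · rw [hxr, h]; exact hr0
    · rw [hxr, h]; exact hr1
  have hxwF : xw ∈ Fset u (n+1) := by
    rcases fin01 (ot (σ w)) with h | h
    · rw [hxw, h]; exact hw0
    · rw [hxw, h]; exact hw1
  have hxw_not : xw ∉ e '' Fset u n := by
    rintro ⟨v, hv, hev⟩
    obtain ⟨h1', h2'⟩ := List.append_inj' hev rfl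
    have h3 : σ v = ot (σ w) := by injection h2'
    rw [h1'] at h3
    exact ot_ne (σ w) h3.symm
  have hxr_not : xr ∉ insert xw (e '' Fset u n) := by
    intro hmem
    rcases hmem with h | ⟨v, hv, hev⟩
    · -- xr = xw : prefixes r = w contradict hner
      obtain ⟨h1', _⟩ := List.append_inj' h rfl
      exact hner (h1'.symm ▸ rfl)
    · obtain ⟨h1', h2'⟩ := List.append_inj' hev rfl
      have h3 : σ v = ot (σ r) := by injection h2'
      rw [h1'] at h3
      exact ot_ne (σ r) h3.symm
  have hsub : insert xr (insert xw (e '' Fset u n)) ⊆ Fset u (n+1) := by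
    intro y hy
    rcases hy with rfl | hy
    · exact hxrF
    · rcases hy with rfl | ⟨v, hv, rfl⟩
      · exact hxwF
      · exact hσ v hv
  have hfin0 : (e '' Fset u n).Finite := (Fset_finite u n).image e
  have hc1 : (e '' Fset u n).ncard = n + 1 := by
    rw [Set.ncard_image_of_injOn hinj, hS]
  have hc2 : (insert xw (e '' Fset u n)).ncard = n + 2 := by
    rw [Set.ncard_insert_of_notMem hxw_not hfin0, hc1]
  have hc3 : (insert xr (insert xw (e '' Fset u n))).ncard = n + 3 := by
    rw [Set.ncard_insert_of_notMem hxr_not (hfin0.insert xw), hc2]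
  have hle := Set.ncard_le_ncard hsub (Fset_finite u (n+1))
  rw [hc3, hS] at hle
  omega


omit hS in
lemma propagate {n : ℕ} {r : List (Fin 2)}
    (hdet : ∀ z z', window u n z = window u n z' → window u n z ≠ r → u (z + n) = u (z' + n))
    {a b : ℕ} (h : window u n a = window u n b) :
    ∀ j, (∀ i, i < j → window u n (a + i) ≠ r) → window u n (a + j) = window u n (b + j) := by
  intro j
  induction j with
  | zero => intro _; simpa using h
  | succ j ih =>
    intro hno
    have hj := ih (fun i hi => hno i (by omega))
    have hl : u (a + j + n) = u (b + j + n) := hdet (a+j) (b+j) hj (hno j (by omega))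
    have hstep := window_step u hj hl
    have e1 : a + (j+1) = a + j + 1 := by omega
    have e2 : b + (j+1) = b + j + 1 := by omega
    rw [e1, e2]; exact hstep

omit hS in
lemma same_branch {n : ℕ} {r : List (Fin 2)}
    (hdet : ∀ z z', window u n z = window u n z' → window u n z ≠ r → u (z + n) = u (z' + n))
    {p q : ℕ} (hp : window u n p = r) (hq : window u n q = r)
    (hl : u (p + n) = u (q + n)) :
    ∀ i, (∀ t, 0 < t → t < i → window u n (p + t) ≠ r) →
      window u n (p + i) = window u n (q + i) := by
  intro i
  induction i with
  | zero => intro _; simpa using hp.trans hq.symm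
  | succ i ih =>
    intro hno
    have hi := ih (fun t ht hti => hno t ht (by omega))
    have hlet : u (p + i + n) = u (q + i + n) := by
      rcases Nat.eq_zero_or_pos i with h0 | h0
      · subst h0; simpa using hl
      · refine hdet (p+i) (q+i) hi ?_
        have := hno i h0 (by omega)
        intro hcon
        exact this hcon
    have hstep := window_step u hi hlet
    have e1 : p + (i+1) = p + i + 1 := by omega
    have e2 : q + (i+1) = q + i + 1 := by omega
    rw [e1, e2]; exact hstep

lemma lower (n : ℕ) : (n + 1) ∈ nrSet u n := by
  classical
  obtain ⟨r, hrF, hr0, hr1⟩ := exists_rsp u hS n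
  have hdet := rsp_det u hS n hr0 hr1
  have hocc : ∀ (c : Fin 2) N, ∃ z, N ≤ z ∧ window u n z = r ∧ u (z + n) = c := by
    intro c N
    have hc : r ++ [c] ∈ Fset u (n+1) := by
      rcases fin01 c with h | h
      · rw [h]; exact hr0
      · rw [h]; exact hr1
    obtain ⟨z, hz, hzw⟩ := recur u hS (n+1) hc N
    rw [window_concat] at hzw
    obtain ⟨h1, h2⟩ := List.append_inj' hzw rfl
    have h3 : u (z + n) = c := by injection h2
    exact ⟨z, hz, h1, h3⟩
  obtain ⟨x₀, -, hx₀r, hx₀c⟩ := hocc 0 0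
  have hP1 : ∃ z, x₀ < z ∧ window u n z = r ∧ u (z + n) = 1 := by
    obtain ⟨z, hz, h1, h2⟩ := hocc 1 (x₀ + 1)
    exact ⟨z, by omega, h1, h2⟩
  set k' := Nat.find hP1 with hk'def
  obtain ⟨hx₀k', hk'r, hk'br⟩ := Nat.find_spec hP1
  set k := Nat.findGreatest (fun z => window u n z = r) (k' - 1) with hkdef
  have hkk' : k < k' := by
    have := Nat.findGreatest_le (P := fun z => window u n z = r) (k' - 1)
    omega
  have hx₀le : x₀ ≤ k' - 1 := by omega
  have hkr : window u n k = r := by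
    rw [hkdef]; exact Nat.findGreatest_spec (P := fun z => window u n z = r) hx₀le hx₀r
  have hkx₀ : x₀ ≤ k := by
    rw [hkdef]; exact Nat.le_findGreatest (P := fun z => window u n z = r) hx₀le hx₀r
  have hbetween1 : ∀ z, k < z → z < k' → window u n z ≠ r := by
    intro z h1 h2
    rw [hkdef] at h1
    exact Nat.findGreatest_is_greatest h1 (by omega)
  have hkbr : u (k + n) = 0 := by
    rcases fin01 (u (k + n)) with h | h
    · exact h
    · exfalso
      have hkx : x₀ < k := by
        rcases Nat.lt_or_ge x₀ k with h' | h'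
        · exact h'
        · exfalso
          have he : x₀ = k := by omega
          rw [he] at hx₀c
          rw [hx₀c] at h
          exact absurd h (by decide)
      exact Nat.find_min hP1 hkk' ⟨hkx, hkr, h⟩
  have hbranch : u (k + n) ≠ u (k' + n) := by rw [hkbr, hk'br]; decide
  have hP2 : ∃ z, k' < z ∧ window u n z = r := by
    obtain ⟨z, hz, h1, _⟩ := hocc 0 (k' + 1)
    exact ⟨z, by omega, h1⟩
  set k'' := Nat.find hP2 with hk''def
  obtain ⟨hk'k'', hk''r⟩ := Nat.find_spec hP2
  have hbetween2 : ∀ z, k' < z → z < k'' → window u n z ≠ r := by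
    intro z h1 h2 hzr
    exact Nat.find_min hP2 h2 ⟨h1, hzr⟩
  set t₀ := k' - k with ht₀
  set t₁ := k'' - k' with ht₁
  have ht₀pos : 0 < t₀ := by omega
  have ht₁pos : 0 < t₁ := by omega
  have L2 : ∀ a b, k < a → a < b → b ≤ k' → window u n a ≠ window u n b := by
    intro a b ha hab hb heq
    have hp := propagate u hdet heq (k' - b) (fun i hi => hbetween1 (a + i) (by omega) (by omega))
    have e : b + (k' - b) = k' := by omega
    rw [e, hk'r] at hp
    exact hbetween1 (a + (k' - b)) (by omega) (by omega) hp
  have L3 : ∀ a b, k' < a → a < b → b ≤ k'' → window u n a ≠ window u n b := by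
    intro a b ha hab hb heq
    have hp := propagate u hdet heq (k'' - b) (fun i hi => hbetween2 (a + i) (by omega) (by omega))
    have e : b + (k'' - b) = k'' := by omega
    rw [e, hk''r] at hp
    exact hbetween2 (a + (k'' - b)) (by omega) (by omega) hp
  have L4 : ∀ x y, k < x → x ≤ k' → k' < y → y ≤ k'' → window u n x = window u n y →
      k' - x = k'' - y ∧ ∀ j, j ≤ k' - x → window u n (k' - j) = window u n (k'' - j) := by
    intro x y hx hxk' hy hyk'' heq
    have halign : k' - x = k'' - y := by
      rcases lt_trichotomy (k'' - y) (k' - x) with h | h | h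
      · exfalso
        have hp := propagate u hdet heq (k'' - y) (fun i hi => hbetween1 (x + i) (by omega) (by omega))
        have e : y + (k'' - y) = k'' := by omega
        rw [e, hk''r] at hp
        exact hbetween1 (x + (k'' - y)) (by omega) (by omega) hp
      · exact h.symm
      · exfalso
        have hp := propagate u hdet heq (k' - x) (fun i hi => hbetween1 (x + i) (by omega) (by omega))
        have e : x + (k' - x) = k' := by omega
        rw [e, hk'r] at hp
        exact hbetween2 (y + (k' - x)) (by omega) (by omega) hp.symm
    refine ⟨halign, fun j hj => ?_⟩
    have hp := propagate u hdet heq ((k' - x) - j) (fun i hi => hbetween1 (x + i) (by omega) (by omega))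
    have e1 : x + (k' - x - j) = k' - j := by omega
    have e2 : y + (k' - x - j) = k'' - j := by omega
    rw [e1, e2] at hp
    exact hp
  have hQ : ∃ j, j = min t₀ t₁ ∨ window u n (k' - j) ≠ window u n (k'' - j) :=
    ⟨min t₀ t₁, Or.inl rfl⟩
  set c := Nat.find hQ with hcdef
  have hc_le : c ≤ min t₀ t₁ := Nat.find_le (Or.inl rfl)
  have hc_eq : ∀ j, j < c → window u n (k' - j) = window u n (k'' - j) := by
    intro j hj
    have := Nat.find_min hQ hj
    push_neg at this
    exact this.2
  have hc_pos : 0 < c := by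
    rcases Nat.eq_zero_or_pos c with h0 | h0
    · exfalso
      have hspec := Nat.find_spec hQ
      rw [← hcdef, h0] at hspec
      rcases hspec with h | h
      · omega
      · rw [Nat.sub_zero, Nat.sub_zero, hk'r, hk''r] at h
        exact h rfl
    · exact h0
  have L4' : ∀ x y, k < x → x ≤ k' → k' < y → y ≤ k'' - c → window u n x ≠ window u n y := by
    intro x y hx hxk' hy hyc heq
    have hyk'' : y ≤ k'' := by omega
    obtain ⟨halign, hall⟩ := L4 x y hx hxk' hy hyk'' heq
    have hcx : c ≤ k' - x := by omega
    have heqc := hall c hcx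
    have hspec := Nat.find_spec hQ
    rw [← hcdef] at hspec
    rcases hspec with h | h
    · omega
    · exact h heqc
  have hdist : ∀ a b, k < a → a < b → b ≤ k'' - c → window u n a ≠ window u n b := by
    intro a b ha hab hb
    rcases le_or_gt b k' with h | h
    · exact L2 a b ha hab h
    · rcases le_or_gt a k' with h2 | h2
      · exact L4' a b ha h2 h hb
      · exact L3 a b h2 hab (by omega)
  set VA := window u n '' Set.Ioc k k' with hVA
  set VB := window u n '' Set.Ioc k' k'' with hVB
  have hinjA : Set.InjOn (window u n) (Set.Ioc k k') := by
    intro a ha b hb heq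
    by_contra hne
    rcases Nat.lt_or_ge a b with h | h
    · exact L2 a b ha.1 h hb.2 heq
    · exact L2 b a hb.1 (by omega) ha.2 heq.symm
  have hinjB : Set.InjOn (window u n) (Set.Ioc k' k'') := by
    intro a ha b hb heq
    by_contra hne
    rcases Nat.lt_or_ge a b with h | h
    · exact L3 a b ha.1 h hb.2 heq
    · exact L3 b a hb.1 (by omega) ha.2 heq.symm
  have hcardIoc : ∀ a b : ℕ, (Set.Ioc a b).ncard = b - a := by
    intro a b; rw [← Finset.coe_Ioc, Set.ncard_coe_finset, Nat.card_Ioc]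
  have hcardA : VA.ncard = t₀ := by
    rw [hVA, Set.ncard_image_of_injOn hinjA, hcardIoc]
  have hcardB : VB.ncard = t₁ := by
    rw [hVB, Set.ncard_image_of_injOn hinjB, hcardIoc]
  have hcover : Fset u n ⊆ VA ∪ VB := by
    intro w hw
    obtain ⟨z, hzge, hzw⟩ := recur u hS n hw k''
    set m := Nat.findGreatest (fun x => window u n x = r) z with hmdef
    have hmr : window u n m = r := by
      rw [hmdef]; exact Nat.findGreatest_spec (P := fun x => window u n x = r) hzge hk''r
    have hmge : k'' ≤ m := by
      rw [hmdef]; exact Nat.le_findGreatest (P := fun x => window u n x = r) hzge hk''r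
    have hmle : m ≤ z := by
      rw [hmdef]; exact Nat.findGreatest_le (P := fun x => window u n x = r) z
    have hmmax : ∀ t, m < t → t ≤ z → window u n t ≠ r := by
      intro t h1 h2
      rw [hmdef] at h1
      exact Nat.findGreatest_is_greatest h1 h2
    set i := z - m with hidef
    rcases fin_cover (u (m + n)) (u (k + n)) (u (k' + n)) hbranch with hbr | hbr
    · left
      have hile : i ≤ t₀ := by
        by_contra hgt
        push_neg at hgt
        have hsb := same_branch u hdet hkr hmr hbr.symm t₀
          (fun t ht1 ht2 => hbetween1 (k + t) (by omega) (by omega))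
        have e : k + t₀ = k' := by omega
        rw [e, hk'r] at hsb
        exact hmmax (m + t₀) (by omega) (by omega) hsb.symm
      rcases Nat.eq_zero_or_pos i with h0 | h0
      · have hwr : w = r := by rw [← hzw, show z = m by omega, hmr]
        exact ⟨k', ⟨by omega, le_refl k'⟩, by rw [hk'r, hwr]⟩
      · have hsb := same_branch u hdet hkr hmr hbr.symm i
          (fun t ht1 ht2 => hbetween1 (k + t) (by omega) (by omega))
        have e : m + i = z := by omega
        rw [e, hzw] at hsb
        exact ⟨k + i, ⟨by omega, by omega⟩, hsb⟩
    · right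
      have hile : i ≤ t₁ := by
        by_contra hgt
        push_neg at hgt
        have hsb := same_branch u hdet hk'r hmr hbr.symm t₁
          (fun t ht1 ht2 => hbetween2 (k' + t) (by omega) (by omega))
        have e : k' + t₁ = k'' := by omega
        rw [e, hk''r] at hsb
        exact hmmax (m + t₁) (by omega) (by omega) hsb.symm
      rcases Nat.eq_zero_or_pos i with h0 | h0
      · have hwr : w = r := by rw [← hzw, show z = m by omega, hmr]
        exact ⟨k'', ⟨by omega, le_refl k''⟩, by rw [hk''r, hwr]⟩
      · have hsb := same_branch u hdet hk'r hmr hbr.symm i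
          (fun t ht1 ht2 => hbetween2 (k' + t) (by omega) (by omega))
        have e : m + i = z := by omega
        rw [e, hzw] at hsb
        exact ⟨k' + i, ⟨by omega, by omega⟩, hsb⟩
  have hAB : VA ∪ VB = Fset u n := by
    apply Set.Subset.antisymm
    · rintro w (⟨i, _, rfl⟩ | ⟨i, _, rfl⟩) <;> exact window_mem u n i
    · exact hcover
  have hDsub : window u n '' Set.Ioc (k' - c) k' ⊆ VA ∩ VB := by
    rintro w ⟨x, hx, rfl⟩
    obtain ⟨hx1, hx2⟩ := hx
    constructor
    · rw [hVA]
      exact ⟨x, ⟨by omega, hx2⟩, rfl⟩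
    · have hj : k' - x < c := by omega
      have hce := hc_eq (k' - x) hj
      have e : k' - (k' - x) = x := by omega
      rw [e] at hce
      rw [hVB]
      exact ⟨k'' - (k' - x), ⟨by omega, by omega⟩, hce.symm⟩
  have hDinj : Set.InjOn (window u n) (Set.Ioc (k' - c) k') := by
    intro a ha b hb heq
    obtain ⟨ha1, ha2⟩ := ha
    obtain ⟨hb1, hb2⟩ := hb
    exact hinjA ⟨by omega, ha2⟩ ⟨by omega, hb2⟩ heq
  have hDcard : (window u n '' Set.Ioc (k' - c) k').ncard = c := by
    rw [Set.ncard_image_of_injOn hDinj, hcardIoc]; omega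
  have hAfin : VA.Finite := (Set.finite_Ioc _ _).image _
  have hBfin : VB.Finite := (Set.finite_Ioc _ _).image _
  have hIE := Set.ncard_union_add_ncard_inter VA VB hAfin hBfin
  have hInt : c ≤ (VA ∩ VB).ncard := by
    rw [← hDcard]
    exact Set.ncard_le_ncard hDsub (hAfin.inter_of_left VB)
  have hUn : (VA ∪ VB).ncard = n + 1 := by rw [hAB, hS]
  have hsum : n + 1 + (VA ∩ VB).ncard = t₀ + t₁ := by
    rw [← hUn, ← hcardA, ← hcardB]; exact hIE
  refine ⟨k + 1, fun i j hij hj => ?_⟩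
  exact hdist (k + 1 + i) (k + 1 + j) (by omega) (by omega) (by omega)

lemma upper (n m : ℕ) (hm : m ∈ nrSet u n) : m ≤ n + 1 := by
  obtain ⟨K, hK⟩ := hm
  have hinj : Set.InjOn (window u n) (Set.Ico K (K + m)) := by
    intro a ha b hb heq
    obtain ⟨ha1, ha2⟩ := ha
    obtain ⟨hb1, hb2⟩ := hb
    by_contra hne
    rcases Nat.lt_or_ge a b with h | h
    · exact hK (a - K) (b - K) (by omega) (by omega)
        (by rw [show K + (a - K) = a by omega, show K + (b - K) = b by omega]; exact heq)
    · exact hK (b - K) (a - K) (by omega) (by omega)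
        (by rw [show K + (b - K) = b by omega, show K + (a - K) = a by omega]; exact heq.symm)
  have h1 : (Set.Ico K (K + m)).ncard = m := by
    rw [← Finset.coe_Ico, Set.ncard_coe_finset, Nat.card_Ico]; omega
  have h2 : window u n '' Set.Ico K (K + m) ⊆ Fset u n := by
    rintro w ⟨i, _, rfl⟩; exact window_mem u n i
  have h3 := Set.ncard_le_ncard h2 (Fset_finite u n)
  rw [Set.ncard_image_of_injOn hinj, h1, hS] at h3
  exact h3

end NRCproof

theorem stmt4 (u : ℕ → Fin 2)
    (hSturmian : ∀ n, Set.ncard {w : List (Fin 2) | ∃ i, window u n i = w} = n + 1)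
    (n : ℕ) :
    nrC u n = n + 1 := by
  have hS : ∀ m, (NRCproof.Fset u m).ncard = m + 1 := hSturmian
  have hmem := NRCproof.lower u hS n
  have hub : ∀ m ∈ nrSet u n, m ≤ n + 1 := fun m hm => NRCproof.upper u hS n m hm
  exact le_antisymm (csSup_le ⟨n+1, hmem⟩ hub) (le_csSup ⟨n+1, hub⟩ hmem)
end

section
/- For the d-bonacci morphism τ on the alphabet {0,1,…,d−1}, the d-th power satisfies τ^d = φ₀ ∘ φ₁ ∘ ⋯ ∘ φ_{d−1}, where φ_i is the elementary Arnoux–Rauzy morphism fixing i and mapping j ↦ ij for j ≠ i. -/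
/-- The elementary Arnoux–Rauzy morphism `φ_i` (given by its action on letters):
`φ_i(i) = i` and `φ_i(j) = ij` for `j ≠ i`. -/
def phi {d : ℕ} (i : Fin d) : Fin d → List (Fin d) :=
  fun j => if j = i then [i] else [i, j]

/-- The `d`-bonacci morphism `τ` (given by its action on letters):
`τ(a) = 0(a+1)` for `a ≤ d-2` and `τ(d-1) = 0`. -/
def tau (d : ℕ) [NeZero d] : Fin d → List (Fin d) :=
  fun a => if (a : ℕ) = d - 1 then [0] else [0, a + 1]

/-- Application of the composition `φ_{c₁} ∘ φ_{c₂} ∘ ⋯ ∘ φ_{c_m}` to a word. -/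
def applyPhis {d : ℕ} : List (Fin d) → List (Fin d) → List (Fin d)
  | [], w => w
  | c :: cs, w => (applyPhis cs w).flatMap (phi c)

lemma tau_eq {d : ℕ} [NeZero d] (a : Fin d) : tau d a = phi 0 (a + 1) := by
  obtain ⟨m, rfl⟩ : ∃ m, d = m + 1 :=
    ⟨d - 1, (Nat.succ_pred_eq_of_pos (Nat.pos_of_ne_zero (NeZero.ne d))).symm⟩
  have key : a + 1 = 0 ↔ (a : ℕ) = m + 1 - 1 := by
    rw [Fin.ext_iff, Fin.val_zero, Fin.val_add_one]
    by_cases h : a = Fin.last m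
    · simp [h, Fin.last]
    · have : (a : ℕ) ≠ m := fun hc => h (Fin.ext hc)
      simp only [if_neg h]
      omega
  unfold tau phi
  by_cases h : (a : ℕ) = m + 1 - 1
  · simp [h, key.mpr h]
  · have h2 : ¬ (a + 1 = 0) := fun hc => h (key.mp hc)
    have h3 : ¬ ((a : ℕ) = m) := by omega
    simp [h3, h2]

lemma phi_shift {d : ℕ} [NeZero d] (i j : Fin d) :
    (phi i j).map (· + 1) = phi (i + 1) (j + 1) := by
  unfold phi
  by_cases h : j = i
  · simp [h]
  · have : ¬ (j + 1 = i + 1) := fun hc => h (by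
      have := add_right_cancel hc; exact this)
    simp [h, this]

lemma flatMap_phi_shift {d : ℕ} [NeZero d] (i : Fin d) (v : List (Fin d)) :
    (v.flatMap (phi i)).map (· + 1) = (v.map (· + 1)).flatMap (phi (i + 1)) := by
  induction v with
  | nil => simp
  | cons a v ih => simp [List.flatMap_cons, ih, phi_shift]

lemma applyPhis_shift {d : ℕ} [NeZero d] (cs : List (Fin d)) (w : List (Fin d)) :
    (applyPhis cs w).map (· + 1) = applyPhis (cs.map (· + 1)) (w.map (· + 1)) := by
  induction cs with
  | nil => rfl
  | cons c cs ih =>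
    simp only [applyPhis, List.map_cons, flatMap_phi_shift, ih]

lemma flatMap_tau {d : ℕ} [NeZero d] (v : List (Fin d)) :
    v.flatMap (tau d) = (v.map (· + 1)).flatMap (phi 0) := by
  induction v with
  | nil => rfl
  | cons a v ih => simp [List.flatMap_cons, ih, tau_eq]

open Fin.NatCast

lemma range_cast {d n : ℕ} [NeZero d] :
    ((List.range (n + 1)).map (Nat.cast : ℕ → Fin d))
      = 0 :: ((List.range n).map (Nat.cast : ℕ → Fin d)).map (· + 1) := by
  rw [List.range_succ_eq_map]
  simp only [List.map_cons, List.map_map, Nat.cast_zero]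
  congr 1
  apply List.map_congr_left
  intro k _
  simp [Nat.cast_add_one]

lemma main_lemma {d : ℕ} [NeZero d] (n : ℕ) (w : List (Fin d)) :
    (fun v : List (Fin d) => v.flatMap (tau d))^[n] w
      = applyPhis ((List.range n).map (Nat.cast : ℕ → Fin d))
          (w.map (· + (n : Fin d))) := by
  induction n with
  | zero => simp [applyPhis]
  | succ n ih =>
    rw [Function.iterate_succ_apply', ih]
    show (applyPhis _ _).flatMap (tau d) = _
    rw [flatMap_tau, applyPhis_shift, range_cast]
    show applyPhis (0 :: _) _ = applyPhis (0 :: _) _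
    congr 1
    rw [List.map_map]
    apply List.map_congr_left
    intro a _
    simp [Nat.cast_add_one, add_assoc]

lemma range_cast_eq_finRange (d : ℕ) [NeZero d] :
    (List.range d).map (Nat.cast : ℕ → Fin d) = List.finRange d := by
  apply List.ext_getElem
  · simp
  · intro i h1 h2
    simp only [List.getElem_map, List.getElem_range, List.getElem_finRange]
    have hi : i < d := by simpa using h2
    ext
    simp [Fin.val_cast_of_lt hi, Fin.cast, Fin.val_mk]

/-- `τ^d = φ₀ ∘ φ₁ ∘ ⋯ ∘ φ_{d-1}` as morphisms of the free monoid. -/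
theorem stmt7 (d : ℕ) [NeZero d] (hd : 2 ≤ d) (w : List (Fin d)) :
    (fun v : List (Fin d) => v.flatMap (tau d))^[d] w
      = applyPhis (List.finRange d) w := by
  rw [main_lemma, range_cast_eq_finRange]
  congr 1
  have : ((d : ℕ) : Fin d) = 0 := by
    ext; simp [Fin.val_natCast]
  rw [this]
  simp
end

section
/- For the d-bonacci morphism τ and every letter a ∈ {0,…,d−1}: |τ^k(a)| = 2^k for 0 ≤ k ≤ d−a−1, and |τ^k(a)| = Σ_{j=1}^{d−a} |τ^{k−j}(0)| for all k ≥ d−a. -/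
namespace Stmt10Aux

abbrev F (d : ℕ) [NeZero d] : List (Fin d) → List (Fin d) := fun v => v.flatMap (tau d)

abbrev L (d : ℕ) [NeZero d] (k : ℕ) (a : Fin d) : ℕ := ((F d)^[k] [a]).length

variable {d : ℕ} [NeZero d]

lemma iter_append (k : ℕ) (u v : List (Fin d)) :
    (F d)^[k] (u ++ v) = (F d)^[k] u ++ (F d)^[k] v := by
  induction k generalizing u v with
  | zero => simp
  | succ k ih => simp only [Function.iterate_succ_apply, F, List.flatMap_append]; exact ih _ _

lemma iter_succ_single (k : ℕ) (a : Fin d) :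
    (F d)^[k+1] [a] = (F d)^[k] (tau d a) := by
  rw [Function.iterate_succ_apply]; simp [F]

lemma L_succ_last (k : ℕ) (a : Fin d) (h : (a : ℕ) = d - 1) :
    L d (k+1) a = L d k 0 := by
  unfold L; rw [iter_succ_single]; simp [tau, h]

lemma L_succ (k : ℕ) (a : Fin d) (h : (a : ℕ) ≠ d - 1) :
    L d (k+1) a = L d k 0 + L d k (a+1) := by
  unfold L
  rw [iter_succ_single]
  have : tau d a = [0] ++ [a+1] := by simp [tau, h]
  rw [this, iter_append]
  simp

lemma val_add_one (hd : 2 ≤ d) (a : Fin d) (h : (a : ℕ) ≠ d - 1) :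
    ((a + 1 : Fin d) : ℕ) = (a : ℕ) + 1 := by
  have ha : (a : ℕ) < d := a.isLt
  have h1 : ((1 : Fin d) : ℕ) = 1 := by
    rw [Fin.val_one']; exact Nat.mod_eq_of_lt (by omega)
  rw [Fin.val_add, h1, Nat.mod_eq_of_lt (by omega)]

lemma L_pow (hd : 2 ≤ d) (k : ℕ) : ∀ a : Fin d, k ≤ d - (a : ℕ) - 1 → L d k a = 2 ^ k := by
  induction k with
  | zero => intro a _; simp [L]
  | succ k ih =>
    intro a hk
    have ha : (a : ℕ) < d := a.isLt
    have h : (a : ℕ) ≠ d - 1 := by omega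
    have hv := val_add_one hd a h
    rw [L_succ k a h, ih 0 (by simp; omega), ih (a+1) (by rw [hv]; omega)]
    ring

lemma L_sum (hd : 2 ≤ d) (k : ℕ) : ∀ a : Fin d, d - (a : ℕ) ≤ k →
    L d k a = ∑ j ∈ Finset.range (d - (a : ℕ)), L d (k - (j + 1)) 0 := by
  induction k using Nat.strong_induction_on with
  | _ k IH =>
    intro a hk
    have ha : (a : ℕ) < d := a.isLt
    obtain ⟨m, rfl⟩ : ∃ m, k = m + 1 := ⟨k - 1, by omega⟩
    by_cases h : (a : ℕ) = d - 1
    · rw [L_succ_last m a h, h]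
      have : d - (d - 1) = 1 := by omega
      rw [this, Finset.sum_range_one]
      simp
    · have hv := val_add_one hd a h
      rw [L_succ m a h]
      have hm : d - ((a + 1 : Fin d) : ℕ) ≤ m := by rw [hv]; omega
      rw [IH m (by omega) (a+1) hm, hv]
      have hn : d - (a : ℕ) = (d - ((a : ℕ) + 1)) + 1 := by omega
      rw [hn, Finset.sum_range_succ', add_comm]
      simp only [Nat.add_sub_cancel]
      congr 1
      apply Finset.sum_congr rfl
      intro j _
      congr 1
      omega

end Stmt10Aux

/-- Lengths of `τ^k(a)`: `|τ^k(a)| = 2^k` for `0 ≤ k ≤ d-a-1`, and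
`|τ^k(a)| = Σ_{j=1}^{d-a} |τ^{k-j}(0)|` for `k ≥ d-a`. -/
theorem stmt10 (d : ℕ) [NeZero d] (hd : 2 ≤ d) (a : Fin d) :
    (∀ k : ℕ, k ≤ d - (a : ℕ) - 1 →
        ((fun v : List (Fin d) => v.flatMap (tau d))^[k] [a]).length = 2 ^ k) ∧
      (∀ k : ℕ, d - (a : ℕ) ≤ k →
        ((fun v : List (Fin d) => v.flatMap (tau d))^[k] [a]).length
          = ∑ j ∈ Finset.range (d - (a : ℕ)),
              ((fun v : List (Fin d) => v.flatMap (tau d))^[k - (j + 1)] [0]).length) := by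
  exact ⟨fun k hk => Stmt10Aux.L_pow hd k a hk, fun k hk => Stmt10Aux.L_sum hd k a hk⟩
end

section
/- For every k ∈ ℕ, the length of the k-th bispecial factor of the d-bonacci word satisfies |B(k)| = (1/(d−1)) · Σ_{i=0}^{d−1} (d−i)·D_{k−i−1} − d/(d−1), where D_j are the d-bonacci numbers (with D_{−1} = 1 and D_{−j} = 0 for 2 ≤ j ≤ d). -/
/-- The `k`-th bispecial factor of the `d`-bonacci word:
`B(0) = ε` and `B(k) = τ(B(k-1))·0`. -/
def Bword (d : ℕ) [NeZero d] : ℕ → List (Fin d)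
  | 0 => []
  | k + 1 => (Bword d k).flatMap (tau d) ++ [0]

section
variable {d : ℕ} [NeZero d]

lemma succ_ne_zero' (a : Fin d) (h : (a : ℕ) ≠ d - 1) : ((a + 1 : Fin d) : ℕ) = (a : ℕ) + 1 := by
  have h1 : (a : ℕ) < d := a.isLt
  have : (a : ℕ) + 1 < d := by omega
  simp [Fin.val_add, Nat.mod_eq_of_lt, this]

lemma flat_len (l : List (Fin d)) :
    (l.flatMap (tau d)).length + l.count ⟨d-1, Nat.sub_lt (NeZero.pos d) one_pos⟩
      = 2 * l.length := by
  induction l with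
  | nil => simp
  | cons a t ih =>
    simp only [List.flatMap_cons, List.length_append, List.count_cons, List.length_cons, beq_iff_eq]
    rcases eq_or_ne (a : ℕ) (d - 1) with h | h
    · simp only [tau, if_pos h, List.length_singleton]
      split_ifs with hc
      · omega
      · exact absurd (Fin.ext h) hc
    · simp only [tau, if_neg h, List.length_cons, List.length_nil]
      split_ifs with hc
      · exact absurd (congrArg Fin.val hc) h
      · omega
lemma val_succ (a : Fin d) (h : (a : ℕ) ≠ d - 1) : ((a + 1 : Fin d) : ℕ) = (a : ℕ) + 1 :=
  succ_ne_zero' a h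

lemma count_flat_zero (l : List (Fin d)) : (l.flatMap (tau d)).count 0 = l.length := by
  induction l with
  | nil => simp
  | cons a t ih =>
    simp only [List.flatMap_cons, List.count_append, List.length_cons, ih]
    have h1 : (tau d a).count 0 = 1 := by
      rcases eq_or_ne (a : ℕ) (d - 1) with h | h
      · simp [tau, h]
      · have : (a + 1 : Fin d) ≠ 0 := by
          intro hc
          have := congrArg Fin.val hc
          rw [val_succ a h] at this
          simp at this
        simp [tau, h, List.count_cons, this]
    omega

lemma count_flat_succ (b : Fin d) (hb : (b : ℕ) < d - 1) (l : List (Fin d)) :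
    (l.flatMap (tau d)).count (b + 1) = l.count b := by
  have hbv : ((b + 1 : Fin d) : ℕ) = (b : ℕ) + 1 := val_succ b (by omega)
  induction l with
  | nil => simp
  | cons a t ih =>
    simp only [List.flatMap_cons, List.count_append, List.count_cons, ih, beq_iff_eq]
    have h1 : (tau d a).count (b + 1) = if a = b then 1 else 0 := by
      rcases eq_or_ne (a : ℕ) (d - 1) with h | h
      · have hab : a ≠ b := by
          intro hc; rw [hc] at h; omega
        have h0 : (0 : Fin d) ≠ b + 1 := by
          intro hc; have := congrArg Fin.val hc; rw [hbv] at this; simp at this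
        simp only [tau, if_pos h, List.count_singleton, beq_iff_eq, if_neg hab,
          if_neg (fun hc => h0 hc)]
      · have hav : ((a + 1 : Fin d) : ℕ) = (a : ℕ) + 1 := val_succ a h
        have h0 : (0 : Fin d) ≠ b + 1 := by
          intro hc; have := congrArg Fin.val hc; rw [hbv] at this; simp at this
        have key : ((a + 1 : Fin d) = b + 1) ↔ (a = b) := by
          constructor
          · intro hc
            have := congrArg Fin.val hc; rw [hav, hbv] at this
            exact Fin.ext (by omega)
          · intro hc; rw [hc]
        simp only [tau, if_neg h, List.count_cons, List.count_nil, beq_iff_eq,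
          if_neg (fun hc => h0 hc)]
        by_cases hc : a = b
        · simp [key, hc]
        · simp [key, hc]
    rw [h1]
    split_ifs <;> omega
lemma countB (hd : 2 ≤ d) : ∀ k (a : Fin d), (Bword d k).count a =
    if (a : ℕ) < k then (Bword d (k - (a : ℕ) - 1)).length + 1 else 0 := by
  intro k
  induction k with
  | zero => intro a; simp [Bword]
  | succ k ih =>
    intro a
    show ((Bword d k).flatMap (tau d) ++ [0]).count a = _
    rw [List.count_append]
    rcases eq_or_ne (a : ℕ) 0 with ha | ha
    · have ha' : a = 0 := Fin.ext ha
      subst ha'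
      rw [count_flat_zero]
      simp [List.count_singleton]
    · have hav : 1 ≤ (a : ℕ) := Nat.one_le_iff_ne_zero.mpr ha
      have haw : (a : ℕ) < d := a.isLt
      set b : Fin d := ⟨(a : ℕ) - 1, by omega⟩ with hbdef
      have hb : (b : ℕ) < d - 1 := by simp [hbdef]; omega
      have hba : b + 1 = a := by
        apply Fin.ext
        rw [val_succ b (by omega)]
        simp [hbdef]; omega
      have hl : List.count a ((Bword d k).flatMap (tau d)) = List.count b (Bword d k) := by
        rw [← hba, count_flat_succ b hb]
      rw [hl, ih b]
      have h0 : ((0 : Fin d) : ℕ) = 0 := rfl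
      have hne : (0 : Fin d) ≠ b + 1 := by
        intro hc
        have := congrArg Fin.val hc
        rw [val_succ b (by omega), h0] at this
        omega
      have hcz : List.count (b + 1) [(0 : Fin d)] = 0 := by
        simp [List.count_singleton]
        intro hc; exact hne hc
      rw [hba] at hcz
      rw [hcz]
      have hbv : (b : ℕ) = (a : ℕ) - 1 := by simp [hbdef]
      have hidx : k - (b : ℕ) - 1 = k + 1 - (a : ℕ) - 1 := by omega
      rw [hidx]
      rcases Nat.lt_or_ge (a : ℕ) (k + 1) with h | h
      · rw [if_pos (show (b : ℕ) < k by omega), if_pos h]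
      · rw [if_neg (show ¬ (b : ℕ) < k by omega), if_neg (by omega)]

lemma lenB (hd : 2 ≤ d) (k : ℕ) :
    (Bword d (k + 1)).length + (if d ≤ k then (Bword d (k - d)).length + 1 else 0)
      = 2 * (Bword d k).length + 1 := by
  have h1 := flat_len (d := d) (Bword d k)
  have h2 := countB hd k ⟨d - 1, Nat.sub_lt (NeZero.pos d) one_pos⟩
  have h3 : (Bword d (k + 1)).length = ((Bword d k).flatMap (tau d)).length + 1 := by
    show ((Bword d k).flatMap (tau d) ++ [0]).length = _
    simp
  have h4 : ((⟨d - 1, Nat.sub_lt (NeZero.pos d) one_pos⟩ : Fin d) : ℕ) = d - 1 := rfl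
  rw [h4] at h2
  rw [h2] at h1
  rw [h3]
  rcases Nat.lt_or_ge k d with h | h
  · rw [if_neg (by omega)]
    rw [if_neg (show ¬ d - 1 < k by omega)] at h1
    omega
  · have hi : k - (d - 1) - 1 = k - d := by omega
    rw [if_pos (show d - 1 < k by omega), hi] at h1
    rw [if_pos h]
    omega
lemma pow2sum (n : ℕ) : (∑ j ∈ Finset.range n, 2 ^ j) + 1 = 2 ^ n := by
  induction n with
  | zero => simp
  | succ n ih => rw [Finset.sum_range_succ]; omega

lemma extQ (hd : 2 ≤ d) (D : ℤ → ℕ)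
    (hDm1 : D (-1) = 1)
    (hDneg : ∀ j : ℕ, 2 ≤ j → j ≤ d → D (-(j : ℤ)) = 0)
    (hDinit : ∀ k : ℕ, k < d → D k = 2 ^ k)
    (hDrec : ∀ k : ℕ, d ≤ k → (D k : ℤ) = ∑ j ∈ Finset.range d, D ((k : ℤ) - (j + 1)))
    (k : ℕ) :
    (D (k : ℤ) : ℚ) = ∑ j ∈ Finset.range d, (D ((k : ℤ) - (j + 1)) : ℚ) := by
  rcases Nat.lt_or_ge k d with hk | hk
  · rw [hDinit k hk]
    have hsub : Finset.range (k + 1) ⊆ Finset.range d := by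
      apply Finset.range_subset_range.mpr; omega
    rw [← Finset.sum_subset hsub (by
      intro j hj hj2
      simp only [Finset.mem_range] at hj hj2
      have h1 : (k : ℤ) - (j + 1) = -((j + 1 - k : ℕ) : ℤ) := by omega
      rw [h1, hDneg (j + 1 - k) (by omega) (by omega)]
      simp)]
    rw [Finset.sum_range_succ]
    have h2 : (k : ℤ) - (k + 1) = -1 := by ring
    rw [h2, hDm1]
    have h3 : ∀ j ∈ Finset.range k, (D ((k : ℤ) - (j + 1)) : ℚ) = ((2 : ℚ)) ^ (k - 1 - j) := by
      intro j hj
      simp only [Finset.mem_range] at hj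
      have h4 : (k : ℤ) - (j + 1) = ((k - 1 - j : ℕ) : ℤ) := by omega
      rw [h4, hDinit (k - 1 - j) (by omega)]
      push_cast
      ring
    rw [Finset.sum_congr rfl h3]
    have h5 : ∑ j ∈ Finset.range k, (2 : ℚ) ^ (k - 1 - j) = ∑ j ∈ Finset.range k, (2 : ℚ) ^ j :=
      Finset.sum_range_reflect (fun j => (2 : ℚ) ^ j) k
    rw [h5]
    have h6 := pow2sum k
    have h7 : ((∑ j ∈ Finset.range k, 2 ^ j : ℕ) : ℚ) + 1 = ((2 : ℚ)) ^ k := by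
      exact_mod_cast congrArg (Nat.cast : ℕ → ℚ) h6
    push_cast at h7
    push_cast
    linarith
  · have := hDrec k hk
    exact_mod_cast congrArg (Int.cast : ℤ → ℚ) this
lemma len_eq (hd : 2 ≤ d) (D : ℤ → ℕ)
    (hDm1 : D (-1) = 1)
    (hDneg : ∀ j : ℕ, 2 ≤ j → j ≤ d → D (-(j : ℤ)) = 0)
    (hDinit : ∀ k : ℕ, k < d → D k = 2 ^ k)
    (hDrec : ∀ k : ℕ, d ≤ k → (D k : ℤ) = ∑ j ∈ Finset.range d, D ((k : ℤ) - (j + 1)))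
    (k : ℕ) :
    ((Bword d k).length : ℚ) = ∑ j ∈ Finset.range k, (D (j : ℤ) : ℚ) := by
  induction k using Nat.strong_induction_on with
  | _ k ih =>
  match k with
  | 0 => simp [Bword]
  | Nat.succ k =>
    have hrec := lenB (d := d) hd k
    rw [Finset.sum_range_succ, ← ih k (by omega)]
    have hDk : (D (k : ℤ) : ℚ) = ((Bword d k).length : ℚ) + 1
        - (if d ≤ k then ((Bword d (k - d)).length : ℚ) + 1 else 0) := by
      rcases Nat.lt_or_ge k d with hk | hk
      · rw [if_neg (by omega), hDinit k hk, ih k (by omega)]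
        have h3 : ∀ j ∈ Finset.range k, (D (j : ℤ) : ℚ) = ((2 : ℚ)) ^ j := by
          intro j hj
          simp only [Finset.mem_range] at hj
          rw [hDinit j (by omega)]
          push_cast; ring
        rw [Finset.sum_congr rfl h3]
        have h6 := pow2sum k
        have h7 : ((∑ j ∈ Finset.range k, 2 ^ j : ℕ) : ℚ) + 1 = ((2 : ℚ)) ^ k := by
          exact_mod_cast congrArg (Nat.cast : ℕ → ℚ) h6
        push_cast at h7 ⊢
        linarith
      · rw [if_pos hk, ih k (by omega), ih (k - d) (by omega)]
        have hext := extQ hd D hDm1 hDneg hDinit hDrec k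
        -- rewrite the range-d sum as an Ico sum
        have e1 : ∀ j ∈ Finset.range d, (D ((k : ℤ) - (j + 1)) : ℚ)
            = (fun i : ℕ => (D (i : ℤ) : ℚ)) (k - d + (d - 1 - j)) := by
          intro j hj
          simp only [Finset.mem_range] at hj
          have : (k : ℤ) - (j + 1) = ((k - d + (d - 1 - j) : ℕ) : ℤ) := by omega
          rw [this]
        rw [Finset.sum_congr rfl e1,
          Finset.sum_range_reflect (fun j => (fun i : ℕ => (D (i : ℤ) : ℚ)) (k - d + j)) d]
          at hext
        have e2 : ∑ j ∈ Finset.range d, (D ((k - d + j : ℕ) : ℤ) : ℚ)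
            = ∑ j ∈ Finset.Ico (k - d) k, (D (j : ℤ) : ℚ) := by
          rw [Finset.sum_Ico_eq_sum_range]
          have : k - (k - d) = d := by omega
          rw [this]
        rw [e2] at hext
        have e3 : ∑ j ∈ Finset.Ico (k - d) k, (D (j : ℤ) : ℚ)
            = ∑ j ∈ Finset.range k, (D (j : ℤ) : ℚ)
              - ∑ j ∈ Finset.range (k - d), (D (j : ℤ) : ℚ) := by
          rw [eq_sub_iff_add_eq, add_comm, Finset.range_eq_Ico, Finset.range_eq_Ico]
          exact Finset.sum_Ico_consecutive (fun j : ℕ => (D (j : ℤ) : ℚ)) (Nat.zero_le _) (Nat.sub_le k d)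
        rw [e3] at hext
        rw [hext]; ring
    -- now combine hrec (ℕ) with hDk
    rcases Nat.lt_or_ge k d with hk | hk
    · rw [if_neg (by omega)] at hrec hDk
      have : ((Bword d (k + 1)).length : ℚ) = 2 * ((Bword d k).length : ℚ) + 1 := by
        exact_mod_cast congrArg (Nat.cast : ℕ → ℚ) (by omega : (Bword d (k+1)).length = 2 * (Bword d k).length + 1)
      rw [this, hDk]; ring
    · rw [if_pos hk] at hrec hDk
      have : ((Bword d (k + 1)).length : ℚ) + (((Bword d (k - d)).length : ℚ) + 1)
          = 2 * ((Bword d k).length : ℚ) + 1 := by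
        exact_mod_cast congrArg (Nat.cast : ℕ → ℚ) hrec
      rw [hDk]; linarith
lemma abstr (e : ℕ) (F : ℕ → ℚ) (hF : F 0 = ∑ j ∈ Finset.range (e + 1), F (j + 1)) :
    ∑ i ∈ Finset.range (e + 1), (((e : ℚ) + 1) - i) * F i
      = ∑ i ∈ Finset.range (e + 1), (((e : ℚ) + 1) - i) * F (i + 1) + (e : ℚ) * F 0 := by
  rw [Finset.sum_range_succ' (fun i => (((e : ℚ) + 1) - i) * F i) e]
  rw [Finset.sum_range_succ (fun i => (((e : ℚ) + 1) - i) * F (i + 1)) e]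
  rw [Finset.sum_range_succ] at hF
  have h1 : ∑ i ∈ Finset.range e, (((e : ℚ) + 1) - ((i + 1 : ℕ) : ℚ)) * F (i + 1)
      = ∑ i ∈ Finset.range e, ((((e : ℚ) + 1) - i) * F (i + 1) - F (i + 1)) := by
    apply Finset.sum_congr rfl
    intro i _
    push_cast
    ring
  rw [h1, Finset.sum_sub_distrib]
  push_cast
  rw [hF]
  ring

lemma qid (hd : 2 ≤ d) (D : ℤ → ℕ)
    (hDm1 : D (-1) = 1)
    (hDneg : ∀ j : ℕ, 2 ≤ j → j ≤ d → D (-(j : ℤ)) = 0)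
    (hDinit : ∀ k : ℕ, k < d → D k = 2 ^ k)
    (hDrec : ∀ k : ℕ, d ≤ k → (D k : ℤ) = ∑ j ∈ Finset.range d, D ((k : ℤ) - (j + 1)))
    (k : ℕ) :
    ((d : ℚ) - 1) * (∑ j ∈ Finset.range k, (D (j : ℤ) : ℚ)) + d
      = ∑ i ∈ Finset.range d, ((d : ℚ) - i) * (D ((k : ℤ) - i - 1) : ℚ) := by
  induction k with
  | zero =>
    obtain ⟨e, rfl⟩ : ∃ e, d = e + 1 := ⟨d - 1, by omega⟩
    rw [Finset.sum_range_succ' (fun i => (((e + 1 : ℕ) : ℚ) - i) * (D (((0 : ℕ) : ℤ) - i - 1) : ℚ)) e]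
    have hz : ∀ i ∈ Finset.range e,
        (((e + 1 : ℕ) : ℚ) - ((i + 1 : ℕ) : ℚ)) * (D (((0 : ℕ) : ℤ) - ((i + 1 : ℕ) : ℤ) - 1) : ℚ) = 0 := by
      intro i hi
      simp only [Finset.mem_range] at hi
      have h1 : ((0 : ℕ) : ℤ) - ((i + 1 : ℕ) : ℤ) - 1 = -((i + 2 : ℕ) : ℤ) := by push_cast; ring
      rw [h1, hDneg (i + 2) (by omega) (by omega)]
      simp
    rw [Finset.sum_eq_zero hz]
    have h2 : ((0 : ℕ) : ℤ) - ((0 : ℕ) : ℤ) - 1 = -1 := by norm_num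
    rw [h2, hDm1]
    push_cast
    simp
  | succ k ih =>
    have hext := extQ hd D hDm1 hDneg hDinit hDrec k
    obtain ⟨e, rfl⟩ : ∃ e, d = e + 1 := ⟨d - 1, by omega⟩
    have hF : (fun i : ℕ => (D ((k : ℤ) - i) : ℚ)) 0
        = ∑ j ∈ Finset.range (e + 1), (fun i : ℕ => (D ((k : ℤ) - i) : ℚ)) (j + 1) := by
      simp only []
      rw [show (k : ℤ) - ((0 : ℕ) : ℤ) = (k : ℤ) by push_cast; ring]
      rw [hext]
      apply Finset.sum_congr rfl
      intro j _
      have : (k : ℤ) - (↑j + 1) = (k : ℤ) - ((j + 1 : ℕ) : ℤ) := by push_cast; ring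
      rw [this]
    have key := abstr e (fun i : ℕ => (D ((k : ℤ) - i) : ℚ)) hF
    -- translate key into the statement's index forms
    have eA : ∑ i ∈ Finset.range (e + 1), (((e + 1 : ℕ) : ℚ) - i) * (D (((k + 1 : ℕ) : ℤ) - i - 1) : ℚ)
        = ∑ i ∈ Finset.range (e + 1), (((e : ℚ) + 1) - i) * (D ((k : ℤ) - i) : ℚ) := by
      apply Finset.sum_congr rfl
      intro i _
      have : ((k + 1 : ℕ) : ℤ) - i - 1 = (k : ℤ) - i := by push_cast; ring
      rw [this]
      push_cast
      ring
    have eB : ∑ i ∈ Finset.range (e + 1), (((e + 1 : ℕ) : ℚ) - i) * (D ((k : ℤ) - i - 1) : ℚ)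
        = ∑ i ∈ Finset.range (e + 1), (((e : ℚ) + 1) - i) * (D ((k : ℤ) - (i + 1 : ℕ)) : ℚ) := by
      apply Finset.sum_congr rfl
      intro i _
      have : (k : ℤ) - i - 1 = (k : ℤ) - ((i + 1 : ℕ) : ℤ) := by push_cast; ring
      rw [this]
      push_cast
      ring
    rw [Finset.sum_range_succ, eA]
    rw [eB] at ih
    rw [key]
    rw [show (k : ℤ) - ((0 : ℕ) : ℤ) = (k : ℤ) by push_cast; ring] at *
    push_cast at ih ⊢
    linarith [ih]
end


/-- The length of the `k`-th bispecial factor of the `d`-bonacci word: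
`|B(k)| = (1/(d-1)) Σ_{i=0}^{d-1} (d-i) D_{k-i-1} - d/(d-1)`. -/
theorem stmt16 (d : ℕ) [NeZero d] (hd : 2 ≤ d) (D : ℤ → ℕ)
    (hDm1 : D (-1) = 1)
    (hDneg : ∀ j : ℕ, 2 ≤ j → j ≤ d → D (-(j : ℤ)) = 0)
    (hDinit : ∀ k : ℕ, k < d → D k = 2 ^ k)
    (hDrec : ∀ k : ℕ, d ≤ k → (D k : ℤ) = ∑ j ∈ Finset.range d, D ((k : ℤ) - (j + 1)))
    (k : ℕ) :
    ((Bword d k).length : ℚ)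
      = (1 / ((d : ℚ) - 1)) *
          (∑ i ∈ Finset.range d, ((d : ℚ) - i) * (D ((k : ℤ) - i - 1) : ℚ))
        - (d : ℚ) / ((d : ℚ) - 1) := by
  have hlen := len_eq hd D hDm1 hDneg hDinit hDrec k
  have hq := qid hd D hDm1 hDneg hDinit hDrec k
  have hd1 : (d : ℚ) - 1 ≠ 0 := by
    have h2 : (2 : ℚ) ≤ (d : ℚ) := by exact_mod_cast hd
    intro hc
    linarith
  rw [hlen, ← hq]
  field_simp
  ring
end
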